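/- arXiv:2112.08151 — 4 statements merged into one kernel-verified Lean document; each statement's English description precedes it below -/
import Mathlib

section
/- Let Ω ⊂ ℝ^d be a bounded open set, v ∈ V a vertex (a fixed point of ∂Ω), δ > 0, and let (x_i)_{i∈ℕ} be points in Ω with radii R_i = ĉ·dist(x_i, v) for some fixed ĉ ∈ (0,1), such that the balls B(x_i, R_i) have finite overlap N (every point of ℝ^d lies in at most N of the balls) and are contained in Ω. Then the series ∑_i R_i^δ converges, with a bound depending only on d, δ, N, ĉ, and Ω. -/
/-!
Since `ĉ < 1`, the distance to `v` on `B(xᵢ, Rᵢ)` is comparable to `Rᵢ`, so `Rᵢ^δ` is bounded by a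
constant times the integral of `dist(·, v)^(δ - d)` over `B(xᵢ, Rᵢ)`. By finite overlap the sum of
these integrals is at most `N` times the integral over `Ω`, which is finite because `Ω` is bounded
and `δ - d > -d`.
-/

open MeasureTheory Metric Set Module
open scoped ENNReal

theorem MeasureTheory.tsum_setLIntegral_le_of_encard_le {α ι : Type*} [MeasurableSpace α]
    [Countable ι] {μ : Measure α} {f : α → ℝ≥0∞} (hf : Measurable f) {s : ι → Set α}
    (hs : ∀ i, MeasurableSet (s i)) {N : ℕ} (hN : ∀ y, {i | y ∈ s i}.encard ≤ N) :
    ∑' i, ∫⁻ y in s i, f y ∂μ ≤ N * ∫⁻ y, f y ∂μ := by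
  have hpoint : ∀ y, ∑' i, (s i).indicator f y ≤ N * f y := fun y => calc
    ∑' i, (s i).indicator f y = ∑' i : {i | y ∈ s i}, f y := by
      rw [tsum_subtype {i | y ∈ s i} fun _ => f y]; rfl
    _ = {i | y ∈ s i}.encard * f y := ENNReal.tsum_const _
    _ ≤ N * f y := by gcongr; exact_mod_cast hN y
  calc ∑' i, ∫⁻ y in s i, f y ∂μ = ∫⁻ y, ∑' i, (s i).indicator f y ∂μ := by
        rw [lintegral_tsum fun i => (hf.indicator (hs i)).aemeasurable]
        simp_rw [lintegral_indicator (hs _)]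
    _ ≤ ∫⁻ y, N * f y ∂μ := lintegral_mono hpoint
    _ = N * ∫⁻ y, f y ∂μ := lintegral_const_mul _ hf

theorem Real.min_rpow_le_rpow_of_mem_Icc {a b c : ℝ} (ha : 0 < a) (hb : b ∈ Icc a c) (s : ℝ) :
    min (a ^ s) (c ^ s) ≤ b ^ s := by
  rcases le_total 0 s with hs | hs
  · exact min_le_left _ _ |>.trans (Real.rpow_le_rpow ha.le hb.1 hs)
  · exact min_le_right _ _ |>.trans (Real.rpow_le_rpow_of_nonpos (ha.trans_le hb.1) hb.2 hs)

theorem dist_mem_Icc_of_mem_ball_mul_dist {X : Type*} [PseudoMetricSpace X] {x y v : X} {c : ℝ}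
    (hy : y ∈ ball x (c * dist x v)) :
    dist y v ∈ Icc ((1 - c) * dist x v) ((1 + c) * dist x v) := by
  rw [mem_ball] at hy
  have := dist_triangle x y v
  have := dist_triangle y x v
  rw [dist_comm x y] at *
  constructor <;> linarith

section AddHaar

variable {E : Type*} [NormedAddCommGroup E] [NormedSpace ℝ E] [FiniteDimensional ℝ E]
  [MeasurableSpace E] [BorelSpace E] (μ : Measure E) [μ.IsAddHaarMeasure]

theorem setLIntegral_closedBall_rpow_dist_lt_top {s : ℝ} (hs : -(finrank ℝ E : ℝ) < s)
    (v : E) (r : ℝ) : ∫⁻ y in closedBall v r, ENNReal.ofReal (dist y v ^ s) ∂μ < ∞ := by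
  rcases Nat.eq_zero_or_pos (finrank ℝ E) with hd | hd
  · have : Subsingleton E := Module.finrank_zero_iff.mp hd
    simp only [Subsingleton.elim _ v, dist_self, setLIntegral_const]
    exact ENNReal.mul_lt_top ENNReal.ofReal_lt_top measure_closedBall_lt_top
  have hnorm : LocallyIntegrable (fun z : E => ‖z‖ ^ s) μ := by
    refine locallyIntegrable_of_norm_le_rpow hd (C := 1) (α := -s) (by linarith) ?_
      (measurable_norm.pow_const s).aestronglyMeasurable
    refine Filter.Eventually.of_forall fun z => ?_
    rw [neg_neg, one_mul, Real.norm_of_nonneg (by positivity)]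
  have := ((hnorm.integrableOn_isCompact (isCompact_closedBall 0 r)).setLIntegral_lt_top)
  rw [← (measurePreserving_sub_right μ v).setLIntegral_comp_preimage_emb
    (measurableEmbedding_subRight v)] at this
  have hpre : (· - v) ⁻¹' closedBall (0 : E) r = closedBall v r := by ext; simp [dist_eq_norm]
  simpa [hpre, dist_eq_norm] using this

theorem ofReal_rpow_dist_mul_le_setLIntegral_ball {c δ : ℝ} (hc : c ∈ Ioo 0 1) (hδ : δ ≠ 0)
    (x v : E) :
    ENNReal.ofReal (dist x v ^ δ) * ENNReal.ofReal (min ((1 - c) ^ (δ - finrank ℝ E))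
        ((1 + c) ^ (δ - finrank ℝ E)) * c ^ finrank ℝ E) * μ (ball 0 1) ≤
      ∫⁻ y in ball x (c * dist x v), ENNReal.ofReal (dist y v ^ (δ - finrank ℝ E)) ∂μ := by
  obtain ⟨hc0, hc1⟩ := hc
  set s := δ - finrank ℝ E
  set m := min ((1 - c) ^ s) ((1 + c) ^ s)
  rcases (dist_nonneg (x := x) (y := v)).eq_or_lt with hD | hD
  · simp [← hD, Real.zero_rpow hδ]
  have hpoint : ∀ y ∈ ball x (c * dist x v),
      ENNReal.ofReal (m * dist x v ^ s) ≤ ENNReal.ofReal (dist y v ^ s) := by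
    intro y hy
    refine ENNReal.ofReal_le_ofReal ?_
    calc m * dist x v ^ s = min (((1 - c) * dist x v) ^ s) (((1 + c) * dist x v) ^ s) := by
          rw [Real.mul_rpow (by linarith) hD.le, Real.mul_rpow (by linarith) hD.le,
            min_mul_of_nonneg _ _ (by positivity)]
      _ ≤ dist y v ^ s := Real.min_rpow_le_rpow_of_mem_Icc (by nlinarith)
          (dist_mem_Icc_of_mem_ball_mul_dist hy) s
  have hpow : dist x v ^ δ = dist x v ^ s * dist x v ^ finrank ℝ E := by
    rw [← Real.rpow_add_natCast hD.ne', sub_add_cancel]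
  calc _ = ENNReal.ofReal (m * dist x v ^ s) * μ (ball x (c * dist x v)) := by
        rw [μ.addHaar_ball_of_pos x (by positivity), ← mul_assoc, ← ENNReal.ofReal_mul
          (by positivity), ← ENNReal.ofReal_mul (by positivity), hpow, mul_pow]
        ring_nf
    _ = ∫⁻ _ in ball x (c * dist x v), ENNReal.ofReal (m * dist x v ^ s) ∂μ :=
        (setLIntegral_const _ _).symm
    _ ≤ _ := setLIntegral_mono' measurableSet_ball hpoint

end AddHaar

theorem summable_radii_pow_general {d : ℕ} (Ω : Set (EuclideanSpace ℝ (Fin d)))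
    (hΩb : Bornology.IsBounded Ω)
    (v : EuclideanSpace ℝ (Fin d))
    (δ : ℝ) (hδ : 0 < δ)
    (chat : ℝ) (hchat : chat ∈ Set.Ioo (0:ℝ) 1)
    (x : ℕ → EuclideanSpace ℝ (Fin d))
    (R : ℕ → ℝ) (hR : ∀ i, R i = chat * dist (x i) v)
    (hsub : ∀ i, Metric.ball (x i) (R i) ⊆ Ω)
    (N : ℕ)
    (hover : ∀ y : EuclideanSpace ℝ (Fin d),
      {i | y ∈ Metric.ball (x i) (R i)}.encard ≤ (N : ℕ∞)) :
    Summable (fun i => R i ^ δ) := by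
  set n := finrank ℝ (EuclideanSpace ℝ (Fin d))
  set f := fun y => ENNReal.ofReal (dist y v ^ (δ - n))
  set K := ENNReal.ofReal (min ((1 - chat) ^ (δ - n)) ((1 + chat) ^ (δ - n)) * chat ^ n) *
    volume (ball (0 : EuclideanSpace ℝ (Fin d)) 1)
  have hK : K ≠ 0 := by
    have := hchat.1
    have := sub_pos.2 hchat.2
    refine mul_ne_zero (ENNReal.ofReal_pos.2 ?_).ne' (measure_ball_pos _ _ one_pos).ne'
    positivity
  obtain ⟨r, hΩr⟩ := hΩb.subset_closedBall v
  have hΩf : ∫⁻ y in Ω, f y < ∞ := (lintegral_mono_set hΩr).trans_lt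
    (setLIntegral_closedBall_rpow_dist_lt_top volume (by linarith) v r)
  have hballs : ∑' i, ∫⁻ y in ball (x i) (R i), f y ≤ N * ∫⁻ y in Ω, f y := by
    simpa only [Measure.restrict_restrict_of_subset (hsub _)] using
      tsum_setLIntegral_le_of_encard_le (μ := volume.restrict Ω) (by fun_prop)
        (fun _ => measurableSet_ball) hover
  have htsum : (∑' i, ENNReal.ofReal (dist (x i) v ^ δ)) * K < ∞ := by
    rw [← ENNReal.tsum_mul_right]
    refine (ENNReal.tsum_le_tsum fun i => ?_).trans_lt
      (hballs.trans_lt (ENNReal.mul_lt_top (by simp) hΩf))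
    rw [← mul_assoc, hR]
    exact ofReal_rpow_dist_mul_le_setLIntegral_ball volume hchat hδ.ne' (x i) v
  have := (ENNReal.summable_toReal (ENNReal.lt_top_of_mul_ne_top_left htsum.ne hK).ne).mul_left
    (chat ^ δ)
  simpa [hR, Real.mul_rpow hchat.1.le dist_nonneg, Real.rpow_nonneg dist_nonneg] using this

/-- Summability of `∑ Rᵢ^δ` for a family of balls centered at points of a bounded open
set `Ω`, with radii `Rᵢ = chat · dist(xᵢ, v)` proportional to the distance to a boundary
point `v`, contained in `Ω` and satisfying a finite overlap property. -/
theorem summable_radii_pow {d : ℕ} (Ω : Set (EuclideanSpace ℝ (Fin d)))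
    (hΩo : IsOpen Ω) (hΩb : Bornology.IsBounded Ω)
    (v : EuclideanSpace ℝ (Fin d)) (hv : v ∈ frontier Ω)
    (δ : ℝ) (hδ : 0 < δ)
    (chat : ℝ) (hchat : chat ∈ Set.Ioo (0:ℝ) 1)
    (x : ℕ → EuclideanSpace ℝ (Fin d)) (hx : ∀ i, x i ∈ Ω)
    (R : ℕ → ℝ) (hR : ∀ i, R i = chat * dist (x i) v)
    (hsub : ∀ i, Metric.ball (x i) (R i) ⊆ Ω)
    (N : ℕ)
    (hover : ∀ y : EuclideanSpace ℝ (Fin d),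
      {i | y ∈ Metric.ball (x i) (R i)}.encard ≤ (N : ℕ∞)) :
    Summable (fun i => R i ^ δ) :=
  summable_radii_pow_general Ω hΩb v δ hδ chat hchat x R hR hsub N hover
end

section
/- Let α ∈ (−1,1) and H > 0, and let C_tr be a suitable constant depending on α. For every function V : [0,∞) → ℝ which is smooth with V and V' in the weighted space L²_α(ℝ_+) (i.e., ∫_0^∞ y^α |V(y)|² dy < ∞ and likewise for V'), it holds that |V(0)|² ≤ C_tr ( ‖V‖_{L²_α(ℝ_+)}^{1−α} ‖V'‖_{L²_α(ℝ_+)}^{1+α} + ‖V‖²_{L²_α(ℝ_+)} ). -/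
open MeasureTheory Set

open intervalIntegral in
lemma wt_Ioc_rpow_integral {r δ : ℝ} (hr : -1 < r) (hδ : 0 ≤ δ) :
    ∫ y in Ioc (0:ℝ) δ, y ^ r = δ ^ (r+1) / (r+1) := by
  have h1 : ∫ y in (0:ℝ)..δ, y ^ r = δ ^ (r+1) / (r+1) := by
    rw [integral_rpow (Or.inl hr), Real.zero_rpow (by linarith : r+1 ≠ 0)]
    ring
  rw [← h1, integral_of_le hδ]

lemma wt_Ioc_rpow_integrable {r δ : ℝ} (hr : -1 < r) (hδ : 0 ≤ δ) :
    IntegrableOn (fun y : ℝ => y ^ r) (Ioc (0:ℝ) δ) := by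
  have := _root_.intervalIntegral.intervalIntegrable_rpow' (a := 0) (b := δ) hr
  rwa [intervalIntegrable_iff, uIoc_of_le hδ] at this

lemma wt_amgm_sqrt {a b : ℝ} (ha : 0 ≤ a) (hb : 0 ≤ b) : Real.sqrt (a*b) ≤ (a+b)/2 := by
  rw [show (a+b)/2 = Real.sqrt (((a+b)/2)^2) from (Real.sqrt_sq (by positivity)).symm]
  exact Real.sqrt_le_sqrt (by nlinarith [sq_nonneg (a-b)])

lemma wt_pointwise_amgm {α ε t d : ℝ} (ht : 0 < t) (hε : 0 < ε) :
    |d| ≤ (ε * t ^ (-α) + ε⁻¹ * (t ^ α * d^2)) / 2 := by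
  have h0 : t ^ (-α) * t ^ α = 1 := by
    rw [← Real.rpow_add ht]; simp
  have h1 : (ε * t ^ (-α)) * (ε⁻¹ * (t ^ α * d ^ 2)) = d ^ 2 := by
    calc (ε * t ^ (-α)) * (ε⁻¹ * (t ^ α * d ^ 2))
        = (ε * ε⁻¹) * ((t ^ (-α) * t ^ α) * d ^ 2) := by ring
      _ = d ^ 2 := by rw [h0, mul_inv_cancel₀ hε.ne']; ring
  calc |d| = Real.sqrt ((ε * t^(-α)) * (ε⁻¹ * (t^α * d^2))) := by
        rw [h1, Real.sqrt_sq_eq_abs]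
    _ ≤ _ := wt_amgm_sqrt (by positivity) (by positivity)

lemma wt_sq_rpow {x : ℝ} (hx : 0 < x) (r : ℝ) : (x ^ r)^2 = x^(2*r) := by
  rw [← Real.rpow_natCast (x^r) 2, ← Real.rpow_mul hx.le]
  ring_nf

set_option maxHeartbeats 2000000 in
/-- One-dimensional multiplicative weighted trace inequality: for `α ∈ (−1,1)` there is
a constant `C_tr > 0` such that every smooth `V : [0,∞) → ℝ` with `V` and `V'` in the
weighted space `L²_α(ℝ_+)` satisfies
`|V(0)|² ≤ C_tr (‖V‖^{1−α} ‖V'‖^{1+α} + ‖V‖²)` with `‖v‖² = ∫_0^∞ y^α v(y)² dy`. -/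
theorem weighted_trace_inequality_1d (α : ℝ) (hα : α ∈ Set.Ioo (-1 : ℝ) 1)
    (H : ℝ) (hH : 0 < H) :
    ∃ Ctr : ℝ, 0 < Ctr ∧
      ∀ V : ℝ → ℝ, ContDiff ℝ (⊤ : ℕ∞) V →
        MeasureTheory.IntegrableOn (fun y => y ^ α * (V y) ^ 2) (Set.Ioi (0:ℝ)) →
        MeasureTheory.IntegrableOn (fun y => y ^ α * (deriv V y) ^ 2) (Set.Ioi (0:ℝ)) →
        (V 0) ^ 2 ≤ Ctr *
          ((Real.sqrt (∫ y in Set.Ioi (0:ℝ), y ^ α * (V y) ^ 2)) ^ (1 - α) *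
           (Real.sqrt (∫ y in Set.Ioi (0:ℝ), y ^ α * (deriv V y) ^ 2)) ^ (1 + α) +
           (∫ y in Set.Ioi (0:ℝ), y ^ α * (V y) ^ 2)) := by
  obtain ⟨hα1, hα2⟩ := hα
  have hden : (0:ℝ) < (1-α)^2*(3-α) := by nlinarith
  have hCtr' : (0:ℝ) < 2*(α+1) + (α+1)/((1-α)^2*(3-α)) + 1 := by
    have := div_pos (by linarith : (0:ℝ) < α+1) hden; linarith
  refine ⟨2*(α+1) + (α+1)/((1-α)^2*(3-α)) + 1, hCtr', ?_⟩
  intro V hV hA2i hB2i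
  set A2 : ℝ := ∫ y in Set.Ioi (0:ℝ), y ^ α * (V y) ^ 2 with hA2def
  set B2 : ℝ := ∫ y in Set.Ioi (0:ℝ), y ^ α * (deriv V y) ^ 2 with hB2def
  have hA2nn : 0 ≤ A2 :=
    setIntegral_nonneg measurableSet_Ioi fun y hy =>
      mul_nonneg (Real.rpow_nonneg (le_of_lt hy) α) (sq_nonneg _)
  have hB2nn : 0 ≤ B2 :=
    setIntegral_nonneg measurableSet_Ioi fun y hy =>
      mul_nonneg (Real.rpow_nonneg (le_of_lt hy) α) (sq_nonneg _)
  have hVc : Continuous V := hV.continuous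
  have hV'c : Continuous (deriv V) := hV.continuous_deriv (by simp)
  have hArest : ∀ δ : ℝ, IntegrableOn (fun y => y ^ α * (V y) ^ 2) (Ioc (0:ℝ) δ) :=
    fun δ => hA2i.mono_set Ioc_subset_Ioi_self
  have hBrest : ∀ δ : ℝ, IntegrableOn (fun y => y ^ α * (deriv V y) ^ 2) (Ioc (0:ℝ) δ) :=
    fun δ => hB2i.mono_set Ioc_subset_Ioi_self
  have hApart : ∀ δ : ℝ, (∫ y in Ioc (0:ℝ) δ, y ^ α * (V y) ^ 2) ≤ A2 := by
    intro δ
    refine setIntegral_mono_set hA2i ?_ (HasSubset.Subset.eventuallyLE Ioc_subset_Ioi_self)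
    filter_upwards [ae_restrict_mem measurableSet_Ioi] with y hy
    exact mul_nonneg (Real.rpow_nonneg (le_of_lt hy) α) (sq_nonneg _)
  have hBpart : ∀ δ : ℝ, (∫ y in Ioc (0:ℝ) δ, y ^ α * (deriv V y) ^ 2) ≤ B2 := by
    intro δ
    refine setIntegral_mono_set hB2i ?_ (HasSubset.Subset.eventuallyLE Ioc_subset_Ioi_self)
    filter_upwards [ae_restrict_mem measurableSet_Ioi] with y hy
    exact mul_nonneg (Real.rpow_nonneg (le_of_lt hy) α) (sq_nonneg _)
  -- Step 1: FTC + AM-GM bound on |V y - V 0|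
  have step1 : ∀ ε : ℝ, 0 < ε → ∀ y : ℝ, 0 < y →
      |V y - V 0| ≤ (ε * (y^(1-α)/(1-α)) + ε⁻¹ * B2)/2 := by
    intro ε hε y hy
    have hftc : ∫ t in (0:ℝ)..y, deriv V t = V y - V 0 :=
      intervalIntegral.integral_deriv_eq_sub
        (fun t _ => (hV.differentiable (by simp)).differentiableAt)
        (hV'c.intervalIntegrable _ _)
    rw [← hftc]
    have hint1 : IntegrableOn (fun t : ℝ => |deriv V t|) (Ioc (0:ℝ) y) :=
      (hV'c.abs).integrableOn_Ioc
    have hint2 : IntegrableOn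
        (fun t : ℝ => (ε * t ^ (-α) + ε⁻¹ * (t ^ α * (deriv V t)^2)) / 2) (Ioc (0:ℝ) y) := by
      exact (((wt_Ioc_rpow_integrable (by linarith) hy.le).const_mul ε).add
        ((hBrest y).const_mul ε⁻¹)).div_const 2
    calc |∫ t in (0:ℝ)..y, deriv V t| ≤ ∫ t in (0:ℝ)..y, |deriv V t| :=
          intervalIntegral.abs_integral_le_integral_abs hy.le
      _ = ∫ t in Ioc (0:ℝ) y, |deriv V t| := intervalIntegral.integral_of_le hy.le
      _ ≤ ∫ t in Ioc (0:ℝ) y, (ε * t ^ (-α) + ε⁻¹ * (t ^ α * (deriv V t)^2)) / 2 :=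
          setIntegral_mono_on hint1 hint2 measurableSet_Ioc
            (fun t ht => wt_pointwise_amgm ht.1 hε)
      _ = ((∫ t in Ioc (0:ℝ) y, ε * t ^ (-α)) +
            ∫ t in Ioc (0:ℝ) y, ε⁻¹ * (t ^ α * (deriv V t)^2)) / 2 := by
          rw [integral_div, integral_add ((wt_Ioc_rpow_integrable (by linarith) hy.le).const_mul ε)
            ((hBrest y).const_mul ε⁻¹)]
      _ ≤ (ε * (y^(1-α)/(1-α)) + ε⁻¹ * B2)/2 := by
          gcongr ((?_ + ?_)/2)
          · rw [integral_const_mul]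
            gcongr ε * ?_
            rw [wt_Ioc_rpow_integral (by linarith) hy.le]
            rw [show -α + 1 = 1 - α by ring]
          · rw [integral_const_mul]
            gcongr ε⁻¹ * ?_
            exact hBpart y
  -- Step 2: pointwise bound on V 0 ^ 2
  have step2 : ∀ ε : ℝ, 0 < ε → ∀ y : ℝ, 0 < y →
      (V 0)^2 ≤ 2*(V y)^2 + ε^2 * y^(2-2*α)/(1-α)^2 + B2^2/ε^2 := by
    intro ε hε y hy
    have h := step1 ε hε y hy
    have htri : |V 0| ≤ |V y| + |V y - V 0| := by
      have h2 := abs_sub (V y) (V y - V 0)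
      simpa using h2
    have hyy : (y^(1-α))^2 = y^(2-2*α) := by
      rw [wt_sq_rpow hy (1-α)]; ring_nf
    have hb2 : ε^2 * y^(2-2*α)/(1-α)^2 = (ε * (y^(1-α)/(1-α)))^2 := by
      rw [← hyy]; field_simp
    have hc2 : B2^2/ε^2 = (ε⁻¹ * B2)^2 := by field_simp
    rw [hb2, hc2]
    have hsq : |V 0|^2 ≤ (|V y| + |V y - V 0|)^2 :=
      pow_le_pow_left₀ (abs_nonneg _) htri 2
    have h1 : (V 0)^2 ≤ 2*(V y)^2 + 2*|V y - V 0|^2 := by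
      nlinarith [hsq, sq_abs (V 0), sq_abs (V y), sq_abs (V y - V 0),
        sq_nonneg (|V y| - |V y - V 0|)]
    have h2 : 2*|V y - V 0|^2 ≤ (ε * (y^(1-α)/(1-α)))^2 + (ε⁻¹ * B2)^2 := by
      nlinarith [mul_self_le_mul_self (abs_nonneg (V y - V 0)) h,
        sq_nonneg (ε * (y^(1-α)/(1-α)) - ε⁻¹ * B2), sq_abs (V y - V 0)]
    linarith
  -- Averaged inequality
  have avg : ∀ ε : ℝ, 0 < ε → ∀ δ : ℝ, 0 < δ →
      (V 0)^2 * (δ^(α+1)/(α+1)) ≤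
        2*A2 + (ε^2/(1-α)^2) * (δ^(2-α+1)/(2-α+1)) + (B2^2/ε^2) * (δ^(α+1)/(α+1)) := by
    intro ε hε δ hδ
    have hintL : IntegrableOn (fun y : ℝ => y ^ α * (V 0)^2) (Ioc (0:ℝ) δ) :=
      (wt_Ioc_rpow_integrable hα1 hδ.le).mul_const _
    have hint1 : IntegrableOn (fun y : ℝ => 2*(y ^ α * (V y)^2)) (Ioc (0:ℝ) δ) :=
      (hArest δ).const_mul 2
    have hint2 : IntegrableOn (fun y : ℝ => (ε^2/(1-α)^2) * y^(2-α)) (Ioc (0:ℝ) δ) :=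
      (wt_Ioc_rpow_integrable (by linarith) hδ.le).const_mul _
    have hint3 : IntegrableOn (fun y : ℝ => (B2^2/ε^2) * y^α) (Ioc (0:ℝ) δ) :=
      (wt_Ioc_rpow_integrable hα1 hδ.le).const_mul _
    have hint12 : IntegrableOn
        (fun y : ℝ => 2*(y ^ α * (V y)^2) + (ε^2/(1-α)^2) * y^(2-α)) (Ioc (0:ℝ) δ) :=
      hint1.add hint2
    have hintR : IntegrableOn
        (fun y : ℝ => 2*(y ^ α * (V y)^2) + (ε^2/(1-α)^2) * y^(2-α) + (B2^2/ε^2) * y^α)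
        (Ioc (0:ℝ) δ) := hint12.add hint3
    have hmono : ∫ y in Ioc (0:ℝ) δ, y ^ α * (V 0)^2 ≤
        ∫ y in Ioc (0:ℝ) δ,
          (2*(y ^ α * (V y)^2) + (ε^2/(1-α)^2) * y^(2-α) + (B2^2/ε^2) * y^α) := by
      refine setIntegral_mono_on hintL hintR measurableSet_Ioc ?_
      intro y hy
      have hy0 : 0 < y := hy.1
      have hmul := mul_le_mul_of_nonneg_left (step2 ε hε y hy0) (Real.rpow_nonneg hy0.le α)
      have hprod : y^α * y^(2-2*α) = y^(2-α) := by
        rw [← Real.rpow_add hy0]; ring_nf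
      calc y^α * (V 0)^2 ≤ y^α * (2*(V y)^2 + ε^2*y^(2-2*α)/(1-α)^2 + B2^2/ε^2) := hmul
        _ = 2*(y^α*(V y)^2) + (ε^2/(1-α)^2)*(y^α*y^(2-2*α)) + (B2^2/ε^2)*y^α := by ring
        _ = 2*(y^α*(V y)^2) + (ε^2/(1-α)^2)*y^(2-α) + (B2^2/ε^2)*y^α := by rw [hprod]
    have hL : ∫ y in Ioc (0:ℝ) δ, y ^ α * (V 0)^2 = (V 0)^2 * (δ^(α+1)/(α+1)) := by
      rw [integral_mul_const, wt_Ioc_rpow_integral hα1 hδ.le]; ring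
    have hR : ∫ y in Ioc (0:ℝ) δ,
          (2*(y ^ α * (V y)^2) + (ε^2/(1-α)^2) * y^(2-α) + (B2^2/ε^2) * y^α)
        = 2*(∫ y in Ioc (0:ℝ) δ, y ^ α * (V y)^2) + (ε^2/(1-α)^2) * (δ^(2-α+1)/(2-α+1))
          + (B2^2/ε^2) * (δ^(α+1)/(α+1)) := by
      rw [integral_add hint12 hint3, integral_add hint1 hint2,
        integral_const_mul, integral_const_mul, integral_const_mul,
        wt_Ioc_rpow_integral (by linarith : (-1:ℝ) < 2-α) hδ.le,
        wt_Ioc_rpow_integral hα1 hδ.le]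
    rw [hL, hR] at hmono
    have hAp := hApart δ
    linarith
  by_cases hV0 : V 0 = 0
  · rw [hV0]
    have hP : 0 ≤ Real.sqrt A2 ^ (1-α) * Real.sqrt B2 ^ (1+α) :=
      mul_nonneg (Real.rpow_nonneg (Real.sqrt_nonneg _) _)
        (Real.rpow_nonneg (Real.sqrt_nonneg _) _)
    have := mul_nonneg hCtr'.le (add_nonneg hP hA2nn)
    simpa using this
  have hpos0 : 0 < (V 0)^2 :=
    lt_of_le_of_ne (sq_nonneg _) (Ne.symm (pow_ne_zero 2 hV0))
  -- B2 > 0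
  have hB2pos : 0 < B2 := by
    rcases lt_or_eq_of_le hB2nn with h | hB0
    · exact h
    exfalso
    have hVy : ∀ y : ℝ, 0 < y → (V 0)^2 ≤ 2*(V y)^2 := by
      intro y hy
      refine le_of_forall_pos_le_add ?_
      intro η hη
      have hypow : 0 < y^(2-2*α) := Real.rpow_pos_of_pos hy _
      have h1α : (0:ℝ) < 1 - α := by linarith
      set ε := Real.sqrt (η*(1-α)^2 / y^(2-2*α)) with hεdef
      have hεpos : 0 < ε := Real.sqrt_pos.mpr (by positivity)
      have hε2 : ε^2 = η*(1-α)^2 / y^(2-2*α) := Real.sq_sqrt (by positivity)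
      have h := step2 ε hεpos y hy
      rw [← hB0] at h
      have he : ε^2 * y^(2-2*α)/(1-α)^2 = η := by
        rw [hε2]; field_simp
      rw [he] at h
      simpa using h
    have hintc : IntegrableOn (fun y : ℝ => y^α * ((V 0)^2/2)) (Ioi (1:ℝ)) := by
      refine Integrable.mono (hA2i.mono_set (Ioi_subset_Ioi zero_le_one))
        (((measurable_id.pow measurable_const).mul_const _).aestronglyMeasurable) ?_
      filter_upwards [ae_restrict_mem measurableSet_Ioi] with y hy
      have h1 : (0:ℝ) < y := lt_trans zero_lt_one hy
      have hrnn : (0:ℝ) ≤ y ^ α := Real.rpow_nonneg h1.le α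
      rw [Real.norm_of_nonneg (by positivity), Real.norm_of_nonneg (by positivity)]
      have h2 := hVy y h1
      exact mul_le_mul_of_nonneg_left (by linarith) hrnn
    have hrpow : IntegrableOn (fun y : ℝ => y^α) (Ioi (1:ℝ)) := by
      have h2 := hintc.const_mul (((V 0)^2/2)⁻¹)
      have he : (fun y : ℝ => ((V 0)^2/2)⁻¹ * (y^α * ((V 0)^2/2))) = fun y : ℝ => y^α := by
        funext y; field_simp
      rwa [he] at h2
    rw [integrableOn_Ioi_rpow_iff zero_lt_one] at hrpow
    linarith
  -- A2 > 0
  have hA2pos : 0 < A2 := by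
    have hcont : ContinuousAt (fun y => (V y)^2) 0 := ((hVc.pow 2)).continuousAt
    have hev : ∀ᶠ y in nhds (0:ℝ), (V 0)^2/2 < (V y)^2 :=
      hcont.eventually_const_lt (by linarith)
    obtain ⟨η, hη, hball⟩ := Metric.eventually_nhds_iff.mp hev
    have hδ : 0 < η/2 := by positivity
    have hlow : ∀ y ∈ Ioc (0:ℝ) (η/2), y^α * ((V 0)^2/2) ≤ y^α * (V y)^2 := by
      intro y hy
      have h1 : dist y 0 < η := by
        rw [Real.dist_eq, sub_zero, abs_of_pos hy.1]; linarith [hy.2]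
      exact mul_le_mul_of_nonneg_left (le_of_lt (hball h1)) (Real.rpow_nonneg hy.1.le α)
    have hI : (η/2)^(α+1)/(α+1) * ((V 0)^2/2) ≤ ∫ y in Ioc (0:ℝ) (η/2), y^α * (V y)^2 := by
      have h3 := setIntegral_mono_on ((wt_Ioc_rpow_integrable hα1 hδ.le).mul_const _)
        (hArest (η/2)) measurableSet_Ioc hlow
      rwa [integral_mul_const, wt_Ioc_rpow_integral hα1 hδ.le] at h3
    have h2 := hApart (η/2)
    have h3 : 0 < (η/2)^(α+1)/(α+1) * ((V 0)^2/2) := by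
      have h4 := Real.rpow_pos_of_pos hδ (α+1)
      have h5 : (0:ℝ) < α+1 := by linarith
      positivity
    linarith
  -- main case
  set A := Real.sqrt A2 with hAdef
  set B := Real.sqrt B2 with hBdef
  have hApos : 0 < A := Real.sqrt_pos.mpr hA2pos
  have hBpos : 0 < B := Real.sqrt_pos.mpr hB2pos
  have hA2eq : A2 = A^2 := (Real.sq_sqrt hA2nn).symm
  have hB2eq : B2 = B^2 := (Real.sq_sqrt hB2nn).symm
  have hA2r : A2 = A ^ ((2:ℕ):ℝ) := by rw [Real.rpow_natCast]; exact hA2eq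
  have hB2r : B2 = B ^ ((2:ℕ):ℝ) := by rw [Real.rpow_natCast]; exact hB2eq
  set δ := A / B with hδdef
  have hδpos : 0 < δ := div_pos hApos hBpos
  set ε := B^((3-α)/2) * A^((α-1)/2) with hεdef
  have hεpos : 0 < ε := mul_pos (Real.rpow_pos_of_pos hBpos _) (Real.rpow_pos_of_pos hApos _)
  set P := A^(1-α) * B^(1+α) with hPdef
  have hPpos : 0 < P := mul_pos (Real.rpow_pos_of_pos hApos _) (Real.rpow_pos_of_pos hBpos _)
  have hδpow : ∀ r : ℝ, δ ^ r = A ^ r * B ^ (-r) := by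
    intro r
    rw [hδdef, Real.div_rpow hApos.le hBpos.le, Real.rpow_neg hBpos.le, div_eq_mul_inv]
  have hε2 : ε^2 = B^(3-α) * A^(α-1) := by
    rw [hεdef, mul_pow, wt_sq_rpow hBpos, wt_sq_rpow hApos,
      show 2*((3-α)/2) = 3-α by ring, show 2*((α-1)/2) = α-1 by ring]
  have G1 : P * δ^(α+1) = A2 := by
    rw [hδpow (α+1), hPdef,
      show A^(1-α)*B^(1+α)*(A^(α+1)*B^(-(α+1))) =
        (A^(1-α)*A^(α+1))*(B^(1+α)*B^(-(α+1))) from by ring,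
      ← Real.rpow_add hApos, ← Real.rpow_add hBpos,
      show (1-α)+(α+1) = ((2:ℕ):ℝ) by push_cast; ring,
      show (1+α)+(-(α+1)) = (0:ℝ) by ring, Real.rpow_zero, mul_one, ← hA2r]
  have G2 : ε^2 * δ^(2-α+1) = A2 := by
    rw [hε2, hδpow (2-α+1),
      show B^(3-α)*A^(α-1)*(A^(2-α+1)*B^(-(2-α+1))) =
        (A^(α-1)*A^(2-α+1))*(B^(3-α)*B^(-(2-α+1))) from by ring,
      ← Real.rpow_add hApos, ← Real.rpow_add hBpos,
      show (α-1)+(2-α+1) = ((2:ℕ):ℝ) by push_cast; ring,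
      show (3-α)+(-(2-α+1)) = (0:ℝ) by ring, Real.rpow_zero, mul_one, ← hA2r]
  have G3 : B2^2 = P * ε^2 := by
    rw [hε2, hPdef,
      show A^(1-α)*B^(1+α)*(B^(3-α)*A^(α-1)) =
        (A^(1-α)*A^(α-1))*(B^(1+α)*B^(3-α)) from by ring,
      ← Real.rpow_add hApos, ← Real.rpow_add hBpos,
      show (1-α)+(α-1) = (0:ℝ) by ring,
      show (1+α)+(3-α) = ((4:ℕ):ℝ) by push_cast; ring, Real.rpow_zero, one_mul,
      Real.rpow_natCast, hB2eq]
    ring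
  have havg := avg ε hεpos δ hδpos
  set d := δ^(α+1)/(α+1) with hddef
  have hαp : (0:ℝ) < α+1 := by linarith
  have hd : 0 < d := div_pos (Real.rpow_pos_of_pos hδpos _) hαp
  have hdel : δ^(α+1) = (α+1)*d := by rw [hddef]; field_simp
  have e1 : 2*A2 = 2*(α+1)*P*d := by rw [← G1, hdel]; ring
  have e2 : (ε^2/(1-α)^2) * (δ^(2-α+1)/(2-α+1)) = ((α+1)/((1-α)^2*(3-α)))*P*d := by
    have h1 : ε^2 * δ^(2-α+1) = P*((α+1)*d) := by rw [← hdel, G2, ← G1, hdel]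
    have h1α : (1-α) ≠ 0 := by intro hc; rw [sub_eq_zero] at hc; linarith [hc]
    have h3α : (3-α) ≠ 0 := by intro hc; linarith
    calc (ε^2/(1-α)^2) * (δ^(2-α+1)/(2-α+1))
        = (ε^2 * δ^(2-α+1))/((1-α)^2*(2-α+1)) := div_mul_div_comm _ _ _ _
      _ = (P*((α+1)*d))/((1-α)^2*(2-α+1)) := by rw [h1]
      _ = ((α+1)/((1-α)^2*(3-α)))*P*d := by
          rw [show (2-α+1) = 3-α from by ring, div_mul_eq_mul_div, div_mul_eq_mul_div]
          ring
  have e3 : (B2^2/ε^2) * d = P*d := by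
    rw [G3]; field_simp
  rw [e1, e2, e3] at havg
  have hkey : (V 0)^2 * d ≤ (2*(α+1) + (α+1)/((1-α)^2*(3-α)) + 1) * P * d := by
    linarith
  have hfin : (V 0)^2 ≤ (2*(α+1) + (α+1)/((1-α)^2*(3-α)) + 1) * P :=
    le_of_mul_le_mul_right hkey hd
  exact hfin.trans (mul_le_mul_of_nonneg_left (le_add_of_nonneg_right hA2nn) hCtr'.le)
end

section
/- Let α ∈ (−1,1), d ≥ 1, and K = ∏_{i=1}^{d+1}(a_i, b_i) ⊂ ℝ^d × ℝ_+ a hypercube with a_{d+1} = 0 and H := b_{d+1}. Then there is a constant C_K such that for all smooth U on K̄ with finite weighted norms, ‖U‖_{L²_α(K)} ≤ C_K ( ‖∇U‖_{L²_α(K)} + ‖U(·,0)‖_{L²(K ∩ {y=0})} ), where ‖V‖²_{L²_α(D)} = ∫_D y^α |V(x,y)|² dx dy. -/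
open MeasureTheory Set


lemma aux_amgm (a b c : ℝ) (ha : 0 ≤ a) (hb : 0 ≤ b) (hc : 0 < c) :
    a * b ≤ (c * a ^ 2 + b ^ 2 / c) / 2 := by
  have h2 : a * b * (2 * c) ≤ c * a ^ 2 * c + b ^ 2 := by nlinarith [sq_nonneg (c * a - b)]
  have e1 : a * b = a * b * (2 * c) / (2 * c) := by field_simp
  have e2 : (c * a ^ 2 * c + b ^ 2) / (2 * c) = (c * a ^ 2 + b ^ 2 / c) / 2 := by
    field_simp
  rw [e1, ← e2]
  exact div_le_div_of_nonneg_right h2 (by positivity) |>.trans_eq rfl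

lemma aux_cs (X A B : ℝ) (hA : 0 < A) (hB : 0 ≤ B)
    (h : ∀ c : ℝ, 0 < c → X ≤ (c * A + B / c) / 2) :
    X ≤ Real.sqrt A * Real.sqrt B := by
  have hsA : 0 < Real.sqrt A := Real.sqrt_pos.2 hA
  refine le_of_forall_pos_le_add fun ε hε => ?_
  set δ : ℝ := ε / Real.sqrt A with hδ
  have hδpos : 0 < δ := div_pos hε hsA
  have hc : 0 < (Real.sqrt B + δ) / Real.sqrt A := div_pos (by positivity) hsA
  have h1 := h _ hc
  have hA' : (Real.sqrt B + δ) / Real.sqrt A * A = Real.sqrt A * (Real.sqrt B + δ) := by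
    rw [div_mul_eq_mul_div, mul_div_assoc, Real.div_sqrt, mul_comm]
  have hB' : B / ((Real.sqrt B + δ) / Real.sqrt A) ≤ Real.sqrt A * Real.sqrt B := by
    rw [div_div_eq_mul_div, div_le_iff₀ (by positivity)]
    have hBe : B = Real.sqrt B * Real.sqrt B := (Real.mul_self_sqrt hB).symm
    have hsB : 0 ≤ Real.sqrt B := Real.sqrt_nonneg B
    nlinarith [mul_nonneg (mul_nonneg hsA.le hsB) hδpos.le]
  rw [hA'] at h1
  have hδA : Real.sqrt A * δ = ε := by rw [hδ, mul_div_cancel₀ _ hsA.ne']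
  nlinarith

lemma aux_sqrt_add (B D : ℝ) (hB : 0 ≤ B) (hD : 0 ≤ D) :
    Real.sqrt (B + D) ≤ Real.sqrt B + Real.sqrt D := by
  have h : B + D ≤ (Real.sqrt B + Real.sqrt D) ^ 2 := by
    nlinarith [Real.sq_sqrt hB, Real.sq_sqrt hD, Real.sqrt_nonneg B, Real.sqrt_nonneg D,
      mul_nonneg (Real.sqrt_nonneg B) (Real.sqrt_nonneg D)]
  calc Real.sqrt (B + D) ≤ Real.sqrt ((Real.sqrt B + Real.sqrt D) ^ 2) := Real.sqrt_le_sqrt h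
    _ = Real.sqrt B + Real.sqrt D := Real.sqrt_sq (by positivity)



open Topology

set_option maxHeartbeats 2000000 in
/-- Weighted Poincaré-type inequality with trace control on a hypercube
`K = ∏_{i=1}^{d}(aᵢ,bᵢ) × (0,H)`: for `α ∈ (−1,1)` there is `C_K` such that for all
smooth `U` on `K̄` with finite weighted norms,
`‖U‖_{L²_α(K)} ≤ C_K (‖∇U‖_{L²_α(K)} + ‖U(·,0)‖_{L²(K ∩ {y=0})})`. -/
theorem weighted_poincare_hypercube {d : ℕ} (hd : 1 ≤ d)
    (α : ℝ) (hα : α ∈ Set.Ioo (-1 : ℝ) 1)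
    (a b : Fin d → ℝ) (hab : ∀ i, a i < b i) (H : ℝ) (hH : 0 < H) :
    ∃ CK : ℝ, 0 < CK ∧
      ∀ U : EuclideanSpace ℝ (Fin d) × ℝ → ℝ,
        ContDiffOn ℝ (⊤ : ℕ∞) U (closure ({x | ∀ i, x i ∈ Set.Ioo (a i) (b i)} ×ˢ Set.Ioo 0 H)) →
        MeasureTheory.IntegrableOn
          (fun p : EuclideanSpace ℝ (Fin d) × ℝ => p.2 ^ α * (U p) ^ 2)
          ({x | ∀ i, x i ∈ Set.Ioo (a i) (b i)} ×ˢ Set.Ioo 0 H) →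
        MeasureTheory.IntegrableOn
          (fun p : EuclideanSpace ℝ (Fin d) × ℝ => p.2 ^ α * ‖fderiv ℝ U p‖ ^ 2)
          ({x | ∀ i, x i ∈ Set.Ioo (a i) (b i)} ×ˢ Set.Ioo 0 H) →
        Real.sqrt (∫ p in ({x | ∀ i, x i ∈ Set.Ioo (a i) (b i)} ×ˢ Set.Ioo 0 H),
            p.2 ^ α * (U p) ^ 2) ≤
          CK * (Real.sqrt (∫ p in ({x | ∀ i, x i ∈ Set.Ioo (a i) (b i)} ×ˢ Set.Ioo 0 H),
                  p.2 ^ α * ‖fderiv ℝ U p‖ ^ 2) +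
                Real.sqrt (∫ x in {x : EuclideanSpace ℝ (Fin d) |
                    ∀ i, x i ∈ Set.Ioo (a i) (b i)}, (U (x, 0)) ^ 2)) := by
  obtain ⟨hα1, hα2⟩ := hα
  set A : Set (EuclideanSpace ℝ (Fin d)) := {x | ∀ i, x i ∈ Set.Ioo (a i) (b i)} with hAdef
  set T : Set ℝ := Set.Ioo 0 H with hTdef
  set S : Set (EuclideanSpace ℝ (Fin d) × ℝ) := closure (A ×ˢ T) with hSdef
  have hAopen : IsOpen A := by
    have : A = ⋂ i, (fun x : EuclideanSpace ℝ (Fin d) => x i) ⁻¹' Set.Ioo (a i) (b i) := by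
      ext x; simp [hAdef]
    rw [this]
    exact isOpen_iInter_of_finite fun i =>
      (isOpen_Ioo).preimage (EuclideanSpace.proj (𝕜 := ℝ) i).continuous
  have hAconv : Convex ℝ A := by
    have : A = ⋂ i, (EuclideanSpace.proj (𝕜 := ℝ) i) ⁻¹' Set.Ioo (a i) (b i) := by
      ext x; simp [hAdef]
    rw [this]
    exact convex_iInter fun i =>
      (convex_Ioo (a i) (b i)).linear_preimage (EuclideanSpace.proj (𝕜 := ℝ) i).toLinearMap
  have hAbd : Bornology.IsBounded A := by
    rw [isBounded_iff_forall_norm_le]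
    refine ⟨Real.sqrt (∑ i, (|a i| + |b i|) ^ 2), fun x hx => ?_⟩
    rw [EuclideanSpace.norm_eq]
    refine Real.sqrt_le_sqrt (Finset.sum_le_sum fun i _ => ?_)
    have h1 := (hx i).1
    have h2 := (hx i).2
    have habs : ‖x i‖ ≤ |a i| + |b i| := by
      rw [Real.norm_eq_abs, abs_le]
      constructor <;> [nlinarith [abs_nonneg (a i), abs_nonneg (b i), neg_abs_le (a i)];
        nlinarith [abs_nonneg (a i), abs_nonneg (b i), le_abs_self (b i)]]
    calc ‖x i‖ ^ 2 ≤ (|a i| + |b i|) ^ 2 := by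
          exact pow_le_pow_left₀ (norm_nonneg _) habs 2
      _ = (|a i| + |b i|) ^ 2 := rfl
  have hPopen : IsOpen (A ×ˢ T) := hAopen.prod isOpen_Ioo
  have hPsub : A ×ˢ T ⊆ S := subset_closure
  have hAne : A.Nonempty := by
    refine ⟨WithLp.toLp 2 (fun i => (a i + b i) / 2), fun i => ?_⟩
    show (a i + b i) / 2 ∈ Set.Ioo (a i) (b i)
    constructor <;> [linarith [hab i]; linarith [hab i]]
  have hPne : (A ×ˢ T).Nonempty := hAne.prod ⟨H / 2, by constructor <;> linarith⟩
  have hScomp : IsCompact S := by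
    have hbd : Bornology.IsBounded (A ×ˢ T) := hAbd.prod (Metric.isBounded_Ioo 0 H)
    exact Metric.isCompact_of_isClosed_isBounded isClosed_closure hbd.closure
  have hSconv : Convex ℝ S := (hAconv.prod (convex_Ioo 0 H)).closure
  have hSud : UniqueDiffOn ℝ S := by
    refine uniqueDiffOn_convex hSconv ?_
    obtain ⟨p, hp⟩ := hPne
    exact ⟨p, interior_maximal hPsub hPopen hp⟩
  have hSeq : S = closure A ×ˢ Set.Icc 0 H := by
    rw [hSdef, closure_prod_eq, hTdef, closure_Ioo hH.ne]
  have hmemS : ∀ x ∈ A, ∀ t ∈ Set.Icc (0:ℝ) H, ((x,t) : EuclideanSpace ℝ (Fin d) × ℝ) ∈ S := by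
    intro x hx t ht
    rw [hSeq]
    exact ⟨subset_closure hx, ht⟩
  set K1 : ℝ := H ^ (1 - α) / (1 - α) with hK1def
  set K2 : ℝ := H ^ (1 + α) / (1 + α) with hK2def
  have hK1 : 0 < K1 := div_pos (Real.rpow_pos_of_pos hH _) (by linarith)
  have hK2 : 0 < K2 := div_pos (Real.rpow_pos_of_pos hH _) (by linarith)
  set C0 : ℝ := 2 * K2 * (1 + K1) with hC0def
  have hC0 : 0 < C0 := by nlinarith
  refine ⟨max 1 (Real.sqrt C0), lt_of_lt_of_le one_pos (le_max_left _ _), ?_⟩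
  intro U hU hInt1 hInt2
  have hUc : ContinuousOn U S := hU.continuousOn
  have hF : ContinuousOn (fderivWithin ℝ U S) S :=
    (hU.fderivWithin (m := (⊤ : ℕ∞)) hSud (by simp)).continuousOn
  set g : EuclideanSpace ℝ (Fin d) × ℝ → ℝ :=
    fun p => fderivWithin ℝ U S p ((0 : EuclideanSpace ℝ (Fin d)), (1 : ℝ)) with hgdef
  have hgc : ContinuousOn g S := hF.clm_apply continuousOn_const
  obtain ⟨M1, hM1⟩ := hScomp.exists_bound_of_continuousOn hUc
  obtain ⟨M2, hM2⟩ := hScomp.exists_bound_of_continuousOn hF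
  have hv1 : ‖((0 : EuclideanSpace ℝ (Fin d)), (1 : ℝ))‖ = 1 := by
    simp [Prod.norm_def]
  have hgM2 : ∀ p ∈ S, |g p| ≤ M2 := by
    intro p hp
    calc |g p| ≤ ‖fderivWithin ℝ U S p‖ * ‖((0 : EuclideanSpace ℝ (Fin d)), (1 : ℝ))‖ :=
          (fderivWithin ℝ U S p).le_opNorm _
      _ = ‖fderivWithin ℝ U S p‖ := by rw [hv1, mul_one]
      _ ≤ M2 := hM2 p hp
  have hnhds : ∀ p ∈ A ×ˢ T, S ∈ 𝓝 p := fun p hp =>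
    Filter.mem_of_superset (hPopen.mem_nhds hp) hPsub
  have hgeq : ∀ p ∈ A ×ˢ T, g p = fderiv ℝ U p ((0 : EuclideanSpace ℝ (Fin d)), (1 : ℝ)) := by
    intro p hp
    show (fderivWithin ℝ U S p) ((0 : EuclideanSpace ℝ (Fin d)), (1 : ℝ)) = _
    rw [fderivWithin_of_mem_nhds (hnhds p hp)]
  have hdiffAt : ∀ p ∈ A ×ˢ T, DifferentiableAt ℝ U p := fun p hp =>
    (hU.contDiffAt (hnhds p hp)).differentiableAt (by simp)
  have hder : ∀ x ∈ A, ∀ t ∈ T, HasDerivAt (fun s => U (x, s)) (g (x, t)) t := by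
    intro x hx t ht
    have h1 : HasDerivAt (fun s : ℝ => ((x, s) : EuclideanSpace ℝ (Fin d) × ℝ))
        ((0 : EuclideanSpace ℝ (Fin d)), (1 : ℝ)) t :=
      HasDerivAt.prodMk (hasDerivAt_const t x) (hasDerivAt_id t)
    have h2 := (hdiffAt (x, t) ⟨hx, ht⟩).hasFDerivAt.comp_hasDerivAt t h1
    rw [hgeq (x, t) ⟨hx, ht⟩]
    exact h2
  have hcurve : ∀ x ∈ A, ContinuousOn (fun t : ℝ => U (x, t)) (Set.Icc 0 H) := fun x hx =>
    hUc.comp ((continuous_const.prodMk continuous_id).continuousOn) (fun t ht => hmemS x hx t ht)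
  have hgcont : ∀ x ∈ A, ContinuousOn (fun t : ℝ => g (x, t)) (Set.Icc 0 H) := fun x hx =>
    hgc.comp ((continuous_const.prodMk continuous_id).continuousOn) (fun t ht => hmemS x hx t ht)
  have hFTC : ∀ x ∈ A, ∀ y ∈ T, U (x, y) = U (x, 0) + ∫ t in (0:ℝ)..y, g (x, t) := by
    intro x hx y hy
    have h0y : Set.Icc (0:ℝ) y ⊆ Set.Icc 0 H := Set.Icc_subset_Icc le_rfl hy.2.le
    have h := intervalIntegral.integral_eq_sub_of_hasDeriv_right_of_le hy.1.le
      ((hcurve x hx).mono h0y)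
      (fun t ht => (hder x hx t ⟨ht.1, ht.2.trans hy.2⟩).hasDerivWithinAt)
      (((hgcont x hx).mono (by rw [Set.uIcc_of_le hy.1.le]; exact h0y)).intervalIntegrable)
    linarith [h]
  have hwint : IntegrableOn (fun t : ℝ => t ^ α) T := by
    have h := intervalIntegral.intervalIntegrable_rpow' (a := 0) (b := H) (by linarith : (-1:ℝ) < α)
    rw [intervalIntegrable_iff_integrableOn_Ioc_of_le hH.le] at h
    exact h.mono_set Set.Ioo_subset_Ioc_self
  have hK2int : (∫ t in T, (t : ℝ) ^ α) = K2 := by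
    rw [hTdef, ← MeasureTheory.integral_Ioc_eq_integral_Ioo,
      ← intervalIntegral.integral_of_le hH.le,
      integral_rpow (Or.inl (by linarith : (-1:ℝ) < α)),
      Real.zero_rpow (ne_of_gt (by linarith : (0:ℝ) < α + 1)), sub_zero,
      hK2def, show α + 1 = 1 + α by ring]
  have hwcont : ContinuousOn (fun t : ℝ => t ^ α) (Set.Ioi 0) := fun t ht =>
    (Real.continuousAt_rpow_const t α (Or.inl (ne_of_gt ht))).continuousWithinAt
  have hgint2 : ∀ x ∈ A, IntegrableOn (fun t : ℝ => t ^ α * g (x, t) ^ 2) T := by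
    intro x hx
    have hcont : ContinuousOn (fun t : ℝ => t ^ α * g (x, t) ^ 2) T := by
      refine ContinuousOn.mul (hwcont.mono (fun t ht => ht.1)) ?_
      exact ((hgcont x hx).mono (fun t (ht : t ∈ T) => ⟨ht.1.le, ht.2.le⟩)).pow 2
    refine Integrable.mono' (hwint.mul_const (M2 ^ 2))
      (hcont.aestronglyMeasurable measurableSet_Ioo) ?_
    refine (MeasureTheory.ae_restrict_iff' measurableSet_Ioo).2 (Filter.Eventually.of_forall ?_)
    intro t ht
    have h1 : (0:ℝ) ≤ t ^ α := Real.rpow_nonneg ht.1.le α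
    have h2 : |g (x, t)| ≤ M2 := hgM2 _ (hmemS x hx t ⟨ht.1.le, ht.2.le⟩)
    have h3 : g (x, t) ^ 2 ≤ M2 ^ 2 := by nlinarith [abs_nonneg (g (x, t)), sq_abs (g (x, t))]
    rw [Real.norm_eq_abs, abs_of_nonneg (mul_nonneg h1 (sq_nonneg _))]
    exact mul_le_mul_of_nonneg_left h3 h1
  set J : EuclideanSpace ℝ (Fin d) → ℝ := fun x => ∫ t in T, t ^ α * g (x, t) ^ 2 with hJdef
  have hJ0 : ∀ x ∈ A, 0 ≤ J x := fun x hx =>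
    setIntegral_nonneg measurableSet_Ioo fun t ht =>
      mul_nonneg (Real.rpow_nonneg ht.1.le α) (sq_nonneg _)
  have hCS : ∀ x ∈ A, ∀ y ∈ T, |∫ t in (0:ℝ)..y, g (x, t)| ≤
      Real.sqrt K1 * Real.sqrt (J x) := by
    intro x hx y hy
    set Ay : ℝ := ∫ t in Set.Ioc 0 y, t ^ (-α) with hAydef
    set By : ℝ := ∫ t in Set.Ioc 0 y, t ^ α * g (x, t) ^ 2 with hBydef
    have hIocT : Set.Ioc (0:ℝ) y ⊆ T := fun t ht => ⟨ht.1, lt_of_le_of_lt ht.2 hy.2⟩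
    have hgIoc : IntegrableOn (fun t : ℝ => t ^ α * g (x, t) ^ 2) (Set.Ioc 0 y) :=
      (hgint2 x hx).mono_set hIocT
    have hwIoc : IntegrableOn (fun t : ℝ => t ^ (-α)) (Set.Ioc 0 y) := by
      have h := intervalIntegral.intervalIntegrable_rpow' (a := 0) (b := y) (by linarith : (-1:ℝ) < -α)
      rwa [intervalIntegrable_iff_integrableOn_Ioc_of_le hy.1.le] at h
    have hAyval : Ay = y ^ (-α + 1) / (-α + 1) := by
      rw [hAydef, ← intervalIntegral.integral_of_le hy.1.le,
        integral_rpow (Or.inl (by linarith : (-1:ℝ) < -α)),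
        Real.zero_rpow (ne_of_gt (by linarith : (0:ℝ) < -α + 1)), sub_zero]
    have hAypos : 0 < Ay := hAyval ▸ div_pos (Real.rpow_pos_of_pos hy.1 _) (by linarith)
    have hAyK1 : Ay ≤ K1 := by
      rw [hAyval, hK1def, show -α + 1 = 1 - α by ring]
      have hnum : y ^ (1 - α) ≤ H ^ (1 - α) :=
        Real.rpow_le_rpow hy.1.le hy.2.le (by linarith)
      exact div_le_div_of_nonneg_right hnum (by linarith) |>.trans_eq rfl
    have hBy0 : 0 ≤ By :=
      setIntegral_nonneg measurableSet_Ioc fun t ht =>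
        mul_nonneg (Real.rpow_nonneg ht.1.le α) (sq_nonneg _)
    have hByJ : By ≤ J x := by
      refine setIntegral_mono_set (hgint2 x hx) ?_ (HasSubset.Subset.eventuallyLE hIocT)
      refine (MeasureTheory.ae_restrict_iff' measurableSet_Ioo).2 (Filter.Eventually.of_forall ?_)
      exact fun t ht => mul_nonneg (Real.rpow_nonneg ht.1.le α) (sq_nonneg _)
    have hgabsint : IntegrableOn (fun t : ℝ => |g (x, t)|) (Set.Ioc 0 y) := by
      refine Integrable.mono' (g := fun _ : ℝ => M2)
        (integrableOn_const measure_Ioc_lt_top.ne)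
        (((hgcont x hx).mono
          (fun t ht => ⟨(hIocT ht).1.le, (hIocT ht).2.le⟩)).abs.aestronglyMeasurable
          measurableSet_Ioc) ?_
      refine (MeasureTheory.ae_restrict_iff' measurableSet_Ioc).2 (Filter.Eventually.of_forall ?_)
      intro t ht
      rw [norm_abs_eq_norm, Real.norm_eq_abs]
      exact hgM2 _ (hmemS x hx t ⟨ht.1.le, ((hIocT ht).2).le⟩)
    have hX : ∀ c : ℝ, 0 < c → |∫ t in (0:ℝ)..y, g (x, t)| ≤ (c * Ay + By / c) / 2 := by
      intro c hc
      rw [intervalIntegral.integral_of_le hy.1.le]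
      have habs : |∫ t in Set.Ioc 0 y, g (x, t)| ≤ ∫ t in Set.Ioc 0 y, |g (x, t)| := by
        have h := intervalIntegral.abs_integral_le_integral_abs
          (f := fun t => g (x, t)) (μ := volume) hy.1.le
        rwa [intervalIntegral.integral_of_le hy.1.le,
          intervalIntegral.integral_of_le hy.1.le] at h
      refine habs.trans ?_
      have hmono : (∫ t in Set.Ioc 0 y, |g (x, t)|) ≤
          ∫ t in Set.Ioc 0 y, (c * t ^ (-α) + (t ^ α * g (x, t) ^ 2) / c) / 2 := by
        refine setIntegral_mono_on hgabsint
          (((hwIoc.const_mul c).add (hgIoc.div_const c)).div_const 2) measurableSet_Ioc ?_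
        intro t ht
        have htpos : (0:ℝ) < t := ht.1
        set u : ℝ := t ^ (-α / 2) with hudef
        set v : ℝ := t ^ (α / 2) * |g (x, t)| with hvdef
        have h1 : u * v = |g (x, t)| := by
          rw [hudef, hvdef, ← mul_assoc, ← Real.rpow_add htpos,
            show -α / 2 + α / 2 = 0 by ring, Real.rpow_zero, one_mul]
        have h2 : u ^ 2 = t ^ (-α) := by
          rw [hudef, sq, ← Real.rpow_add htpos, show -α / 2 + -α / 2 = -α by ring]
        have h3 : v ^ 2 = t ^ α * g (x, t) ^ 2 := by
          rw [hvdef, mul_pow, sq_abs, sq (t ^ (α / 2)), ← Real.rpow_add htpos,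
            show α / 2 + α / 2 = α by ring]
        calc |g (x, t)| = u * v := h1.symm
          _ ≤ (c * u ^ 2 + v ^ 2 / c) / 2 :=
              aux_amgm u v c (Real.rpow_nonneg htpos.le _)
                (mul_nonneg (Real.rpow_nonneg htpos.le _) (abs_nonneg _)) hc
          _ = (c * t ^ (-α) + (t ^ α * g (x, t) ^ 2) / c) / 2 := by rw [h2, h3]
      refine hmono.trans ?_
      rw [integral_div, integral_add (hwIoc.const_mul c) (hgIoc.div_const c),
        integral_const_mul, integral_div]
    have hcs := aux_cs _ Ay By hAypos hBy0 hX
    refine hcs.trans (mul_le_mul (Real.sqrt_le_sqrt hAyK1) (Real.sqrt_le_sqrt hByJ)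
      (Real.sqrt_nonneg _) (Real.sqrt_nonneg _))
  have hUint2 : ∀ x ∈ A, IntegrableOn (fun t : ℝ => t ^ α * U (x, t) ^ 2) T := by
    intro x hx
    have hcont : ContinuousOn (fun t : ℝ => t ^ α * U (x, t) ^ 2) T := by
      refine ContinuousOn.mul (hwcont.mono (fun t ht => ht.1)) ?_
      exact ((hcurve x hx).mono (fun t (ht : t ∈ T) => ⟨ht.1.le, ht.2.le⟩)).pow 2
    refine Integrable.mono' (hwint.mul_const (M1 ^ 2))
      (hcont.aestronglyMeasurable measurableSet_Ioo) ?_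
    refine (MeasureTheory.ae_restrict_iff' measurableSet_Ioo).2 (Filter.Eventually.of_forall ?_)
    intro t ht
    have h1 : (0:ℝ) ≤ t ^ α := Real.rpow_nonneg ht.1.le α
    have h2 : |U (x, t)| ≤ M1 := hM1 _ (hmemS x hx t ⟨ht.1.le, ht.2.le⟩)
    have h3 : U (x, t) ^ 2 ≤ M1 ^ 2 := by nlinarith [abs_nonneg (U (x, t)), sq_abs (U (x, t))]
    rw [Real.norm_eq_abs, abs_of_nonneg (mul_nonneg h1 (sq_nonneg _))]
    exact mul_le_mul_of_nonneg_left h3 h1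
  have hPW : ∀ x ∈ A, ∀ y ∈ T, U (x, y) ^ 2 ≤ 2 * U (x, 0) ^ 2 + 2 * (K1 * J x) := by
    intro x hx y hy
    have h1 := hFTC x hx y hy
    have h2 := hCS x hx y hy
    have h3 : Real.sqrt K1 ^ 2 = K1 := Real.sq_sqrt hK1.le
    have h4 : Real.sqrt (J x) ^ 2 = J x := Real.sq_sqrt (hJ0 x hx)
    have h5 : |U (x, y)| ≤ |U (x, 0)| + Real.sqrt K1 * Real.sqrt (J x) := by
      rw [h1]
      refine (abs_add_le _ _).trans ?_
      exact add_le_add_right h2 _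
    calc U (x, y) ^ 2 = |U (x, y)| ^ 2 := (sq_abs _).symm
      _ ≤ (|U (x, 0)| + Real.sqrt K1 * Real.sqrt (J x)) ^ 2 :=
          pow_le_pow_left₀ (abs_nonneg _) h5 2
      _ ≤ 2 * U (x, 0) ^ 2 + 2 * (K1 * J x) := by
          nlinarith [sq_nonneg (|U (x, 0)| - Real.sqrt K1 * Real.sqrt (J x)),
            mul_pow (Real.sqrt K1) (Real.sqrt (J x)) 2, h3, h4, sq_abs (U (x, 0))]
  have hslice : ∀ x ∈ A, (∫ y in T, y ^ α * U (x, y) ^ 2) ≤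
      K2 * (2 * U (x, 0) ^ 2 + 2 * (K1 * J x)) := by
    intro x hx
    have hmono : (∫ y in T, y ^ α * U (x, y) ^ 2) ≤
        ∫ y in T, y ^ α * (2 * U (x, 0) ^ 2 + 2 * (K1 * J x)) := by
      refine setIntegral_mono_on (hUint2 x hx) (hwint.mul_const _) measurableSet_Ioo ?_
      intro y hy
      exact mul_le_mul_of_nonneg_left (hPW x hx y hy) (Real.rpow_nonneg hy.1.le α)
    refine hmono.trans ?_
    rw [integral_mul_const, hK2int]
  have hrestrict : (volume : Measure (EuclideanSpace ℝ (Fin d) × ℝ)).restrict (A ×ˢ T) =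
      (volume.restrict A).prod (volume.restrict T) := by
    rw [Measure.volume_eq_prod, Measure.prod_restrict]
  have hInt1' : Integrable (fun p : EuclideanSpace ℝ (Fin d) × ℝ => p.2 ^ α * U p ^ 2)
      ((volume.restrict A).prod (volume.restrict T)) := by
    rw [← hrestrict]; exact hInt1
  have hInt2' : Integrable (fun p : EuclideanSpace ℝ (Fin d) × ℝ => p.2 ^ α * ‖fderiv ℝ U p‖ ^ 2)
      ((volume.restrict A).prod (volume.restrict T)) := by
    rw [← hrestrict]; exact hInt2
  have hIeq : (∫ p in A ×ˢ T, p.2 ^ α * U p ^ 2) =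
      ∫ x in A, ∫ y in T, y ^ α * U (x, y) ^ 2 := by
    rw [show (∫ p in A ×ˢ T, p.2 ^ α * U p ^ 2) =
      ∫ p, p.2 ^ α * U p ^ 2 ∂((volume.restrict A).prod (volume.restrict T)) by rw [← hrestrict]]
    exact integral_prod _ hInt1'
  have hDeq : (∫ p in A ×ˢ T, p.2 ^ α * ‖fderiv ℝ U p‖ ^ 2) =
      ∫ x in A, ∫ y in T, y ^ α * ‖fderiv ℝ U (x, y)‖ ^ 2 := by
    rw [show (∫ p in A ×ˢ T, p.2 ^ α * ‖fderiv ℝ U p‖ ^ 2) =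
      ∫ p, p.2 ^ α * ‖fderiv ℝ U p‖ ^ 2 ∂((volume.restrict A).prod (volume.restrict T)) by
        rw [← hrestrict]]
    exact integral_prod _ hInt2'
  have hφint : Integrable (fun x => ∫ y in T, y ^ α * U (x, y) ^ 2) (volume.restrict A) :=
    hInt1'.integral_prod_left
  have hψint : Integrable (fun x => ∫ y in T, y ^ α * ‖fderiv ℝ U (x, y)‖ ^ 2)
      (volume.restrict A) := hInt2'.integral_prod_left
  have hJψ : ∀ x ∈ A, J x ≤ ∫ y in T, y ^ α * ‖fderiv ℝ U (x, y)‖ ^ 2 := by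
    intro x hx
    have hFeq : ∀ t ∈ T, ‖fderiv ℝ U (x, t)‖ = ‖fderivWithin ℝ U S (x, t)‖ := fun t ht => by
      rw [fderivWithin_of_mem_nhds (hnhds (x, t) ⟨hx, ht⟩)]
    have hcont0 : ContinuousOn (fun t : ℝ => ‖fderivWithin ℝ U S (x, t)‖) (Set.Icc 0 H) :=
      (hF.comp ((continuous_const.prodMk continuous_id).continuousOn)
        (fun t ht => hmemS x hx t ht)).norm
    have hcont : ContinuousOn (fun t : ℝ => t ^ α * ‖fderiv ℝ U (x, t)‖ ^ 2) T := by
      refine ContinuousOn.mul (hwcont.mono (fun t ht => ht.1)) ?_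
      refine ((hcont0.mono (fun t (ht : t ∈ T) => ⟨ht.1.le, ht.2.le⟩)).pow 2).congr ?_
      intro t ht
      show ‖fderiv ℝ U (x, t)‖ ^ 2 = ‖fderivWithin ℝ U S (x, t)‖ ^ 2
      rw [hFeq t ht]
    have hFint : IntegrableOn (fun t : ℝ => t ^ α * ‖fderiv ℝ U (x, t)‖ ^ 2) T := by
      refine Integrable.mono' (hwint.mul_const (M2 ^ 2))
        (hcont.aestronglyMeasurable measurableSet_Ioo) ?_
      refine (MeasureTheory.ae_restrict_iff' measurableSet_Ioo).2 (Filter.Eventually.of_forall ?_)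
      intro t ht
      have h1 : (0:ℝ) ≤ t ^ α := Real.rpow_nonneg ht.1.le α
      have h2 : ‖fderiv ℝ U (x, t)‖ ≤ M2 := by
        rw [hFeq t ht]; exact hM2 _ (hmemS x hx t ⟨ht.1.le, ht.2.le⟩)
      have h3 : ‖fderiv ℝ U (x, t)‖ ^ 2 ≤ M2 ^ 2 := by nlinarith [norm_nonneg (fderiv ℝ U (x, t))]
      rw [Real.norm_eq_abs, abs_of_nonneg (mul_nonneg h1 (sq_nonneg _))]
      exact mul_le_mul_of_nonneg_left h3 h1
    refine setIntegral_mono_on (hgint2 x hx) hFint measurableSet_Ioo ?_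
    intro t ht
    have h1 : |g (x, t)| ≤ ‖fderiv ℝ U (x, t)‖ := by
      rw [hgeq (x, t) ⟨hx, ht⟩]
      calc |fderiv ℝ U (x, t) ((0 : EuclideanSpace ℝ (Fin d)), (1 : ℝ))| ≤
          ‖fderiv ℝ U (x, t)‖ * ‖((0 : EuclideanSpace ℝ (Fin d)), (1 : ℝ))‖ :=
            (fderiv ℝ U (x, t)).le_opNorm _
        _ = ‖fderiv ℝ U (x, t)‖ := by rw [hv1, mul_one]
    have h2 : g (x, t) ^ 2 ≤ ‖fderiv ℝ U (x, t)‖ ^ 2 := by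
      nlinarith [abs_nonneg (g (x, t)), sq_abs (g (x, t))]
    exact mul_le_mul_of_nonneg_left h2 (Real.rpow_nonneg ht.1.le α)
  have hAclcomp : IsCompact (closure A) :=
    Metric.isCompact_of_isClosed_isBounded isClosed_closure hAbd.closure
  have htrace_cont : ContinuousOn (fun x : EuclideanSpace ℝ (Fin d) => U (x, 0) ^ 2)
      (closure A) := by
    refine (hUc.comp (Continuous.continuousOn (continuous_id.prodMk continuous_const)) ?_).pow 2
    intro x hx
    rw [hSeq]
    exact ⟨hx, le_rfl, hH.le⟩
  have hBint : IntegrableOn (fun x : EuclideanSpace ℝ (Fin d) => U (x, 0) ^ 2) A :=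
    (htrace_cont.integrableOn_compact hAclcomp).mono_set subset_closure
  have hBnn : 0 ≤ ∫ x in A, U (x, 0) ^ 2 :=
    setIntegral_nonneg hAopen.measurableSet fun x _ => sq_nonneg _
  have hDnn : 0 ≤ ∫ p in A ×ˢ T, p.2 ^ α * ‖fderiv ℝ U p‖ ^ 2 :=
    setIntegral_nonneg hPopen.measurableSet fun p hp =>
      mul_nonneg (Real.rpow_nonneg hp.2.1.le _) (sq_nonneg _)
  have hImain : (∫ p in A ×ˢ T, p.2 ^ α * U p ^ 2) ≤
      2 * K2 * (∫ x in A, U (x, 0) ^ 2) +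
        2 * K1 * K2 * (∫ p in A ×ˢ T, p.2 ^ α * ‖fderiv ℝ U p‖ ^ 2) := by
    rw [hIeq, hDeq]
    have hRHSint : Integrable (fun x => 2 * K2 * U (x, 0) ^ 2 +
        2 * K1 * K2 * (∫ y in T, y ^ α * ‖fderiv ℝ U (x, y)‖ ^ 2)) (volume.restrict A) :=
      (hBint.const_mul _).add (hψint.const_mul _)
    have hmono : (∫ x in A, ∫ y in T, y ^ α * U (x, y) ^ 2) ≤
        ∫ x in A, (2 * K2 * U (x, 0) ^ 2 +
          2 * K1 * K2 * (∫ y in T, y ^ α * ‖fderiv ℝ U (x, y)‖ ^ 2)) := by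
      refine integral_mono_ae hφint hRHSint ?_
      refine (MeasureTheory.ae_restrict_iff' hAopen.measurableSet).2 (Filter.Eventually.of_forall ?_)
      intro x hx
      show (∫ y in T, y ^ α * U (x, y) ^ 2) ≤ 2 * K2 * U (x, 0) ^ 2 +
        2 * K1 * K2 * ∫ y in T, y ^ α * ‖fderiv ℝ U (x, y)‖ ^ 2
      have h1 := hslice x hx
      have h2 := hJψ x hx
      have h3 : (0:ℝ) ≤ 2 * K1 * K2 := by positivity
      have h4 := mul_le_mul_of_nonneg_left h2 h3
      have h5 : K2 * (2 * U (x, 0) ^ 2 + 2 * (K1 * J x)) =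
          2 * K2 * U (x, 0) ^ 2 + 2 * K1 * K2 * J x := by ring
      linarith [h1.trans_eq h5, h4]
    refine hmono.trans ?_
    rw [integral_add (hBint.const_mul _) (hψint.const_mul _), integral_const_mul, integral_const_mul]
  have hInn : 0 ≤ ∫ p in A ×ˢ T, p.2 ^ α * U p ^ 2 :=
    setIntegral_nonneg hPopen.measurableSet fun p hp =>
      mul_nonneg (Real.rpow_nonneg hp.2.1.le _) (sq_nonneg _)
  calc Real.sqrt (∫ p in A ×ˢ T, p.2 ^ α * U p ^ 2) ≤
      Real.sqrt (C0 * ((∫ p in A ×ˢ T, p.2 ^ α * ‖fderiv ℝ U p‖ ^ 2) +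
        (∫ x in A, U (x, 0) ^ 2))) := by
        refine Real.sqrt_le_sqrt ?_
        have e : C0 * ((∫ p in A ×ˢ T, p.2 ^ α * ‖fderiv ℝ U p‖ ^ 2) +
            (∫ x in A, U (x, 0) ^ 2)) =
            2 * K2 * (∫ x in A, U (x, 0) ^ 2) +
              2 * K1 * K2 * (∫ p in A ×ˢ T, p.2 ^ α * ‖fderiv ℝ U p‖ ^ 2) +
              2 * K2 * (∫ p in A ×ˢ T, p.2 ^ α * ‖fderiv ℝ U p‖ ^ 2) +
              2 * K1 * K2 * (∫ x in A, U (x, 0) ^ 2) := by rw [hC0def]; ring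
        linarith [hImain, e.le, e.ge, mul_nonneg hK2.le hDnn,
          mul_nonneg (mul_nonneg hK1.le hK2.le) hBnn]
    _ = Real.sqrt C0 * Real.sqrt ((∫ p in A ×ˢ T, p.2 ^ α * ‖fderiv ℝ U p‖ ^ 2) +
        (∫ x in A, U (x, 0) ^ 2)) := Real.sqrt_mul hC0.le _
    _ ≤ Real.sqrt C0 * (Real.sqrt (∫ p in A ×ˢ T, p.2 ^ α * ‖fderiv ℝ U p‖ ^ 2) +
        Real.sqrt (∫ x in A, U (x, 0) ^ 2)) :=
          mul_le_mul_of_nonneg_left (aux_sqrt_add _ _ hDnn hBnn) (Real.sqrt_nonneg _)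
    _ ≤ (max 1 (Real.sqrt C0)) * (Real.sqrt (∫ p in A ×ˢ T, p.2 ^ α * ‖fderiv ℝ U p‖ ^ 2) +
        Real.sqrt (∫ x in A, U (x, 0) ^ 2)) :=
          mul_le_mul_of_nonneg_right (le_max_right _ _) (by positivity)
end

section
/- Fix c, ζ ∈ (0,1) with c₀ := 1 − c(1+ζ) > 0, let ω ⊂ ℝ^d be bounded open and M ⊂ ∂ω closed. For x ∈ ω set B_x := closed ball of radius c·dist(x,M) around x and B̂_x := closed ball of radius (1+ζ)c·dist(x,M) around x. Then there is a countable set of points (x_i) ⊂ ω and N ∈ ℕ depending only on d, c, ζ such that: (1) the balls B_{x_i} cover ω; (2) every point of ℝ^d belongs to at most N of the stretched balls B̂_{x_i}. -/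
/-!
Write `δ = dist(·, M)`. Vitali's enlargement lemma gives points `p ∈ ω` whose balls of
radius `c/3 · δ(p)` are pairwise disjoint, such that the ball of this kind around any `x ∈ ω`
meets one around some `p` with `δ(x) ≤ 2 δ(p)`; hence the balls of radius `c · δ(p)` cover
`ω`. Since `δ` is `1`-Lipschitz, `y` in the stretched ball around `p` forces
`(1 - (1+ζ)c) δ(p) ≤ δ(y) ≤ 2 δ(p)`, so the disjoint balls of all such `p` have radii
comparable to `δ(y)` and lie in a ball around `y` of radius comparable to `δ(y)`; comparing
volumes bounds their number in terms of `d`, `c`, `ζ` only. The family is infinite, because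
finitely many closed balls missing `M` cannot cover `ω`, whose closure meets `M`; so it can be
enumerated by `ℕ` without repetitions.
-/

open MeasureTheory Metric Set Module

section Packing

variable {E : Type*} [NormedAddCommGroup E] [NormedSpace ℝ E] [FiniteDimensional ℝ E]

theorem Finset.card_le_of_pairwiseDisjoint_closedBall {s : Finset E} {r : E → ℝ} {y : E}
    {a R : ℝ} (ha : 0 < a) (hR : 0 ≤ R)
    (hdisj : (s : Set E).PairwiseDisjoint fun p => closedBall p (r p))
    (hr : ∀ p ∈ s, a ≤ r p) (hsub : ∀ p ∈ s, closedBall p (r p) ⊆ closedBall y R) :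
    (s.card : ℝ) ≤ (R / a) ^ finrank ℝ E := by
  borelize E
  let μ : Measure E := Measure.addHaar
  set V := μ.real (closedBall 0 1)
  have hV : 0 < V :=
    ENNReal.toReal_pos (measure_closedBall_pos μ 0 one_pos).ne' measure_closedBall_lt_top.ne
  have hvol : ∑ p ∈ s, r p ^ finrank ℝ E * V ≤ R ^ finrank ℝ E * V := calc
    ∑ p ∈ s, r p ^ finrank ℝ E * V = μ.real (⋃ p ∈ s, closedBall p (r p)) := by
      rw [measureReal_biUnion_finset hdisj (fun p _ => measurableSet_closedBall)
        fun p _ => measure_closedBall_lt_top.ne]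
      exact Finset.sum_congr rfl fun p hp =>
        (Measure.addHaar_real_closedBall' μ p (ha.le.trans (hr p hp))).symm
    _ ≤ μ.real (closedBall y R) :=
      measureReal_mono (iUnion₂_subset hsub) measure_closedBall_lt_top.ne
    _ = R ^ finrank ℝ E * V := Measure.addHaar_real_closedBall' μ y hR
  have hcount : s.card * a ^ finrank ℝ E ≤ R ^ finrank ℝ E := by
    refine le_of_mul_le_mul_right ?_ hV
    calc (s.card * a ^ finrank ℝ E) * V = ∑ p ∈ s, a ^ finrank ℝ E * V := by
          rw [Finset.sum_const, nsmul_eq_mul, mul_assoc]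
      _ ≤ ∑ p ∈ s, r p ^ finrank ℝ E * V := Finset.sum_le_sum fun p hp => by
          gcongr; exact hr p hp
      _ ≤ R ^ finrank ℝ E * V := hvol
  rwa [div_pow, le_div_iff₀ (by positivity)]

theorem Set.encard_le_of_pairwiseDisjoint_closedBall {s : Set E} {r : E → ℝ} {y : E}
    {a R : ℝ} (ha : 0 < a)
    (hdisj : s.PairwiseDisjoint fun p => closedBall p (r p))
    (hr : ∀ p ∈ s, a ≤ r p) (hsub : ∀ p ∈ s, closedBall p (r p) ⊆ closedBall y R) :
    s.encard ≤ ⌈(R / a) ^ finrank ℝ E⌉₊ := by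
  by_contra! hlt
  obtain ⟨F, hFs, hF⟩ := exists_subset_encard_eq (Order.add_one_le_of_lt hlt)
  have hFfin : F.Finite := finite_of_encard_eq_coe hF
  have hcard : (hFfin.toFinset.card : ℝ) = ⌈(R / a) ^ finrank ℝ E⌉₊ + 1 := by
    rw [hFfin.encard_eq_coe_toFinset_card] at hF
    exact_mod_cast hF
  obtain ⟨p, hp⟩ : F.Nonempty := nonempty_of_encard_ne_zero (by simp [hF])
  have hR : 0 ≤ R := by
    have := mem_closedBall.1 (hsub p (hFs hp) (mem_closedBall_self (ha.le.trans (hr p (hFs hp)))))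
    exact dist_nonneg.trans this
  have := Finset.card_le_of_pairwiseDisjoint_closedBall (s := hFfin.toFinset) ha hR
    (by simpa using hdisj.subset hFs) (by simpa using fun p hp => hr p (hFs hp))
    (by simpa using fun p hp => hsub p (hFs hp))
  linarith [Nat.le_ceil ((R / a) ^ finrank ℝ E)]

end Packing

section DistanceProportionalRadii

variable {α : Type*} [MetricSpace α] {δ : α → ℝ}

theorem LipschitzWith.apply_mem_Icc_of_mem_closedBall (hδ : LipschitzWith 1 δ) {p y : α}
    {k : ℝ} (hy : y ∈ closedBall p (k * δ p)) :
    δ y ∈ Icc ((1 - k) * δ p) ((1 + k) * δ p) := by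
  have hdist := abs_sub_le_iff.1 (by simpa [Real.dist_eq] using hδ.dist_le_mul y p)
  have hyp : dist y p ≤ k * δ p := hy
  constructor <;> linarith [hdist.1, hdist.2]

theorem exists_pairwiseDisjoint_closedBall_covering {s : Set α} {c R : ℝ} (hc : 0 ≤ c)
    (hδ : ∀ x ∈ s, 0 ≤ δ x) (hδR : ∀ x ∈ s, δ x ≤ R) :
    ∃ t ⊆ s, t.PairwiseDisjoint (fun p => closedBall p (c / 3 * δ p)) ∧
      s ⊆ ⋃ p ∈ t, closedBall p (c * δ p) := by
  obtain ⟨t, hts, hdisj, hcov⟩ := Vitali.exists_disjoint_subfamily_covering_enlargement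
    (fun p => closedBall p (c / 3 * δ p)) s δ 2 one_lt_two hδ R hδR
    fun p hp => nonempty_closedBall.2 (by have := hδ p hp; positivity)
  refine ⟨t, hts, hdisj, fun x hx => ?_⟩
  obtain ⟨p, hpt, ⟨w, hwx, hwp⟩, hxp⟩ := hcov x hx
  refine mem_biUnion hpt (mem_closedBall.2 ?_)
  calc dist x p ≤ dist w x + dist w p := dist_triangle_left x p w
    _ ≤ c / 3 * δ x + c / 3 * δ p := add_le_add hwx hwp
    _ ≤ c / 3 * (2 * δ p) + c / 3 * δ p := by gcongr
    _ = c * δ p := by ring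

theorem LipschitzWith.infinite_of_subset_biUnion_closedBall (hδ : LipschitzWith 1 δ)
    {s t : Set α} {c : ℝ} {m : α} (hc : c < 1) (hm : m ∈ closure s) (hδm : δ m = 0)
    (hpos : ∀ p ∈ t, 0 < δ p) (hcov : s ⊆ ⋃ p ∈ t, closedBall p (c * δ p)) :
    t.Infinite := by
  intro hfin
  have hclosed := hfin.isClosed_biUnion fun p _ => isClosed_closedBall (x := p) (ε := c * δ p)
  obtain ⟨p, hpt, hmp⟩ := mem_iUnion₂.1 (closure_minimal hcov hclosed hm)
  have := (hδ.apply_mem_Icc_of_mem_closedBall hmp).1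
  nlinarith [hpos p hpt]

end DistanceProportionalRadii

theorem Set.Countable.exists_injective_range_eq {α : Type*} {s : Set α} (hc : s.Countable)
    (hi : s.Infinite) : ∃ f : ℕ → α, Function.Injective f ∧ range f = s := by
  have := hc.to_subtype
  have := hi.to_subtype
  obtain ⟨_⟩ := nonempty_denumerable s
  let e := (Denumerable.eqv s).symm
  exact ⟨(↑) ∘ e, Subtype.val_injective.comp e.injective, by
    rw [range_comp, e.range_eq_univ, image_univ, Subtype.range_coe]⟩

section Overlap

variable {E : Type*} [NormedAddCommGroup E] [NormedSpace ℝ E] [FiniteDimensional ℝ E]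

theorem LipschitzWith.encard_setOf_mem_closedBall_le {δ : E → ℝ} (hδ : LipschitzWith 1 δ)
    {t : Set E} (hpos : ∀ p ∈ t, 0 < δ p) {κ k : ℝ} (hκ : 0 < κ) (hk : k < 1)
    (hdisj : t.PairwiseDisjoint fun p => closedBall p (κ * δ p)) (y : E) :
    {p ∈ t | y ∈ closedBall p (k * δ p)}.encard ≤
      ⌈(2 * (κ + k) / (κ * (1 - k))) ^ finrank ℝ E⌉₊ := by
  rcases eq_empty_or_nonempty {p ∈ t | y ∈ closedBall p (k * δ p)}
    with hempty | ⟨p₀, hp₀t, hp₀⟩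
  · rw [hempty]
    simp
  have hband : ∀ p ∈ t, y ∈ closedBall p (k * δ p) →
      0 ≤ k ∧ (1 - k) * δ p ≤ δ y ∧ δ y ≤ 2 * δ p := fun p hpt hy => by
    have hk₀ : 0 ≤ k := nonneg_of_mul_nonneg_left (dist_nonneg.trans hy) (hpos p hpt)
    have := hδ.apply_mem_Icc_of_mem_closedBall hy
    exact ⟨hk₀, this.1, by nlinarith [this.2, hpos p hpt]⟩
  have hy : 0 < δ y := by
    obtain ⟨-, h, -⟩ := hband p₀ hp₀t hp₀
    nlinarith [hpos p₀ hp₀t]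
  have hratio : (κ + k) * δ y / (1 - k) / (κ * δ y / 2) = 2 * (κ + k) / (κ * (1 - k)) := by
    field_simp
  rw [← hratio]
  refine Set.encard_le_of_pairwiseDisjoint_closedBall (y := y) (by positivity)
    (hdisj.subset fun p hp => hp.1) (fun p hp => ?_) (fun p hp => ?_)
  · obtain ⟨hpt, hyp⟩ := hp
    have := (hband p hpt hyp).2.2
    nlinarith
  · obtain ⟨hpt, hyp⟩ := hp
    obtain ⟨hk₀, hlow, -⟩ := hband p hpt hyp
    have hδp : δ p ≤ δ y / (1 - k) := by rw [le_div_iff₀ (by linarith)]; linarith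
    intro w hw
    rw [mem_closedBall] at hw hyp ⊢
    calc dist w y ≤ dist w p + dist y p := dist_triangle_right w y p
      _ ≤ κ * δ p + k * δ p := add_le_add hw hyp
      _ = (κ + k) * δ p := by ring
      _ ≤ (κ + k) * (δ y / (1 - k)) := by gcongr
      _ = (κ + k) * δ y / (1 - k) := by ring

end Overlap

theorem besicovitch_covering_dist_radii_general {d : ℕ} (c ζ : ℝ)
    (hc : c ∈ Set.Ioo (0:ℝ) 1)
    (hc₀ : 0 < 1 - c * (1 + ζ)) :
    ∃ N : ℕ,
      ∀ (ω : Set (EuclideanSpace ℝ (Fin d))), IsOpen ω → Bornology.IsBounded ω →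
        ω.Nonempty →
      ∀ (M : Set (EuclideanSpace ℝ (Fin d))), IsClosed M → M ⊆ frontier ω →
        M.Nonempty →
      ∃ x : ℕ → EuclideanSpace ℝ (Fin d),
        (∀ i, x i ∈ ω) ∧
        ω ⊆ ⋃ i, Metric.closedBall (x i) (c * Metric.infDist (x i) M) ∧
        ∀ y : EuclideanSpace ℝ (Fin d),
          {i | y ∈ Metric.closedBall (x i)
              ((1 + ζ) * c * Metric.infDist (x i) M)}.encard ≤ (N : ℕ∞) := by
  refine ⟨⌈(2 * (c / 3 + (1 + ζ) * c) / (c / 3 * (1 - (1 + ζ) * c))) ^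
    finrank ℝ (EuclideanSpace ℝ (Fin d))⌉₊, ?_⟩
  obtain ⟨hc0, hc1⟩ := hc
  intro ω hω hbd _ M hM hMω ⟨m, hm⟩
  have hδ : LipschitzWith 1 (infDist · M) := lipschitz_infDist_pt M
  have hpos : ∀ x ∈ ω, 0 < infDist x M := fun x hx =>
    (hM.notMem_iff_infDist_pos ⟨m, hm⟩).1 fun hxM => (hω.frontier_eq ▸ hMω hxM).2 hx
  obtain ⟨R, hR⟩ := hbd.subset_closedBall m
  obtain ⟨t, htω, hdisj, hcov⟩ := exists_pairwiseDisjoint_closedBall_covering hc0.le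
    (fun x hx => (hpos x hx).le) fun x hx => (infDist_le_dist_of_mem hm).trans (hR hx)
  have htc : t.Countable := hdisj.countable_of_nonempty_interior fun p hp =>
    (nonempty_ball.2 (by have := hpos p (htω hp); positivity)).mono
      ball_subset_interior_closedBall
  have hti : t.Infinite := hδ.infinite_of_subset_biUnion_closedBall hc1
    (frontier_subset_closure (hMω hm)) (infDist_zero_of_mem hm) (fun p hp => hpos p (htω hp)) hcov
  obtain ⟨x, hx, rfl⟩ := htc.exists_injective_range_eq hti
  refine ⟨x, fun i => htω (mem_range_self i), fun y hy => ?_, fun y => ?_⟩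
  · obtain ⟨_, ⟨i, rfl⟩, hyi⟩ := mem_iUnion₂.1 (hcov hy)
    exact mem_iUnion.2 ⟨i, hyi⟩
  · calc _ = (x '' (x ⁻¹' {p | y ∈ closedBall p ((1 + ζ) * c * infDist p M)})).encard :=
          (hx.encard_image _).symm
      _ ≤ {p ∈ range x | y ∈ closedBall p ((1 + ζ) * c * infDist p M)}.encard :=
          encard_mono image_preimage_eq_range_inter.le
      _ ≤ _ := hδ.encard_setOf_mem_closedBall_le (fun p hp => hpos p (htω hp))
          (by positivity) (by linarith [mul_comm c (1 + ζ)]) hdisj y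

/-- Besicovitch-type covering lemma with radii proportional to the distance to a closed
subset `M` of the boundary: there are countably many points `xᵢ ∈ ω` such that the closed
balls `B̄(xᵢ, c·dist(xᵢ,M))` cover `ω`, while the stretched balls
`B̄(xᵢ, (1+ζ)c·dist(xᵢ,M))` have overlap at most `N` everywhere in `ℝ^d`, with `N`
depending only on `d`, `c`, `ζ`. -/
theorem besicovitch_covering_dist_radii {d : ℕ} (c ζ : ℝ)
    (hc : c ∈ Set.Ioo (0:ℝ) 1) (hζ : ζ ∈ Set.Ioo (0:ℝ) 1)
    (hc₀ : 0 < 1 - c * (1 + ζ)) :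
    ∃ N : ℕ,
      ∀ (ω : Set (EuclideanSpace ℝ (Fin d))), IsOpen ω → Bornology.IsBounded ω →
        ω.Nonempty →
      ∀ (M : Set (EuclideanSpace ℝ (Fin d))), IsClosed M → M ⊆ frontier ω →
        M.Nonempty →
      ∃ x : ℕ → EuclideanSpace ℝ (Fin d),
        (∀ i, x i ∈ ω) ∧
        ω ⊆ ⋃ i, Metric.closedBall (x i) (c * Metric.infDist (x i) M) ∧
        ∀ y : EuclideanSpace ℝ (Fin d),
          {i | y ∈ Metric.closedBall (x i)
              ((1 + ζ) * c * Metric.infDist (x i) M)}.encard ≤ (N : ℕ∞) :=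
  besicovitch_covering_dist_radii_general c ζ hc hc₀
end
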